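/- arXiv:2209.04668 — 2 statements merged into one kernel-verified Lean document; each statement's English description precedes it below -/
import Mathlib

section
/- Let G be a connected finite simple graph on at least two vertices with normalized Laplacian 𝓛, let a be a vertex, and suppose every eigenvalue in the eigenvalue support S of a is rational. Let m be the least common multiple of the denominators (in lowest terms) of the elements of S, and let g be the greatest common divisor of the integers m·θ for θ ∈ S. Then τ₀ = 2mπ/g is the smallest positive real number τ with exp(i τ 𝓛) e_a = e_a, and every positive time τ at which exp(i τ 𝓛) e_a = e_a is an integer multiple of τ₀. -/
/-!
Diagonalise `𝓛 = U diag(λ) U*` with `U` unitary. Then `exp(iτ𝓛) e_a = e_a` exactly when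
`e^{iτλ_j} = 1` for every `j` with `U_{aj} ≠ 0`, and these `λ_j` are exactly the eigenvalues in
the support of `a`: a real eigenvector with nonzero `a`-entry lives on columns of `U` with
`U_{aj} ≠ 0`, and conversely the real or imaginary part of such a column is a real eigenvector.
So `τ` is a period iff `τθ ∈ 2πℤ` for all `θ ∈ S`, i.e. iff `τ·mθ ∈ 2πmℤ` for the integers `mθ`,
which by Bézout means `τg ∈ 2πmℤ`. The support is not `{0}` since `𝓛_aa = 1`, so `g ≠ 0`.
-/

open Matrix

/-- The normalized Laplacian `𝓛 = D^{-1/2}(D − A)D^{-1/2}` of a simple graph. -/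
noncomputable def normLap {V : Type*} [Fintype V] [DecidableEq V]
    (G : SimpleGraph V) [DecidableRel G.Adj] : Matrix V V ℝ :=
  Matrix.diagonal (fun v => (Real.sqrt (G.degree v))⁻¹) *
    (Matrix.diagonal (fun v => (G.degree v : ℝ)) - G.adjMatrix ℝ) *
    Matrix.diagonal (fun v => (Real.sqrt (G.degree v))⁻¹)

/-- The quantum walk transition matrix `U(t) = exp(i t 𝓛)`. -/
noncomputable def qwalk {V : Type*} [Fintype V] [DecidableEq V]
    (G : SimpleGraph V) [DecidableRel G.Adj] (t : ℝ) : Matrix V V ℂ :=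
  NormedSpace.exp ((Complex.I * (t : ℂ)) • (normLap G).map Complex.ofReal)

/-- `θ` lies in the eigenvalue support of vertex `a` for the symmetric matrix `L`:
some eigenvector of `L` for `θ` has nonzero entry at `a`. -/
def inSupport {V : Type*} [Fintype V] (L : Matrix V V ℝ) (a : V) (θ : ℝ) : Prop :=
  ∃ v : V → ℝ, v ≠ 0 ∧ L.mulVec v = θ • v ∧ v a ≠ 0

/-- Vertices `a` and `b` are strongly cospectral with respect to `L`. -/
def StronglyCospectral {V : Type*} [Fintype V] (L : Matrix V V ℝ) (a b : V) : Prop :=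
  ∀ θ : ℝ, (∀ v : V → ℝ, L.mulVec v = θ • v → v a = v b) ∨
           (∀ v : V → ℝ, L.mulVec v = θ • v → v a = - v b)

/-- `θ` is in the positive eigenvalue support `S⁺` of strongly cospectral vertices `a, b`. -/
def Splus {V : Type*} [Fintype V] (L : Matrix V V ℝ) (a b : V) (θ : ℝ) : Prop :=
  inSupport L a θ ∧ ∀ v : V → ℝ, L.mulVec v = θ • v → v a = v b

/-- `θ` is in the negative eigenvalue support `S⁻` of strongly cospectral vertices `a, b`. -/
def Sminus {V : Type*} [Fintype V] (L : Matrix V V ℝ) (a b : V) (θ : ℝ) : Prop :=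
  inSupport L a θ ∧ ∀ v : V → ℝ, L.mulVec v = θ • v → v a = - v b

/-- Perfect state transfer from `a` to `b` at time `τ`. -/
noncomputable def PST {V : Type*} [Fintype V] [DecidableEq V]
    (G : SimpleGraph V) [DecidableRel G.Adj] (a b : V) (τ : ℝ) : Prop :=
  ∃ γ : ℂ, ‖γ‖ = 1 ∧ (qwalk G τ).mulVec (Pi.single a 1) = γ • (Pi.single b 1 : V → ℂ)

/-- `m`: the lcm of the denominators of a finite set of rationals. -/
def mOf (T : Finset ℚ) : ℕ := T.lcm fun q => q.den

/-- `g`: the gcd of the integers `m·θ` for `θ ∈ T`. -/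
def gOf (T : Finset ℚ) : ℤ := T.gcd fun q => ((mOf T : ℚ) * q).num

namespace Matrix

variable {n : Type*} [Fintype n] [DecidableEq n]

theorem conj_diagonal_mulVec_eq_smul_iff {𝕜 : Type*} [Field 𝕜] [StarRing 𝕜]
    (U : unitaryGroup n 𝕜) (d : n → 𝕜) (μ : 𝕜) (e : n → 𝕜) :
    ((U : Matrix n n 𝕜) * diagonal d * star (U : Matrix n n 𝕜)) *ᵥ e = μ • e ↔
      ∀ j, (star (U : Matrix n n 𝕜) *ᵥ e) j ≠ 0 → d j = μ := by
  rw [← mulVec_mulVec, ← mulVec_mulVec]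
  set w := star (U : Matrix n n 𝕜) *ᵥ e
  have he : e = (U : Matrix n n 𝕜) *ᵥ w := by
    rw [mulVec_mulVec, mem_unitaryGroup_iff.mp U.2, one_mulVec]
  have hU : Function.Injective ((U : Matrix n n 𝕜) *ᵥ ·) := fun x y hxy => by
    simpa only [mulVec_mulVec, mem_unitaryGroup_iff'.mp U.2, one_mulVec] using
      congrArg (star (U : Matrix n n 𝕜) *ᵥ ·) hxy
  conv_lhs => rw [he, ← mulVec_smul, hU.eq_iff]
  simp only [funext_iff, mulVec_diagonal, Pi.smul_apply, smul_eq_mul, mul_eq_mul_right_iff,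
    or_iff_not_imp_right]

variable {𝕜 : Type*} [RCLike 𝕜] {A : Matrix n n 𝕜}

theorem IsHermitian.mulVec_eq_smul_iff (hA : A.IsHermitian) (μ : 𝕜) (e : n → 𝕜) :
    A *ᵥ e = μ • e ↔
      ∀ j, (star (hA.eigenvectorUnitary : Matrix n n 𝕜) *ᵥ e) j ≠ 0 →
        (hA.eigenvalues j : 𝕜) = μ := by
  conv_lhs => rw [hA.spectral_theorem, Unitary.conjStarAlgAut_apply]
  exact conj_diagonal_mulVec_eq_smul_iff _ _ _ _

theorem IsHermitian.exp_smul {A : Matrix n n ℂ} (hA : A.IsHermitian) (c : ℂ) :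
    NormedSpace.exp (c • A) = (hA.eigenvectorUnitary : Matrix n n ℂ) *
      diagonal (fun j => Complex.exp (c * hA.eigenvalues j)) *
      star (hA.eigenvectorUnitary : Matrix n n ℂ) := by
  conv_lhs => rw [hA.spectral_theorem, Unitary.conjStarAlgAut_apply, ← smul_mul_assoc,
    ← mul_smul_comm, ← diagonal_smul]
  refine (exp_units_conj (Unitary.toUnits hA.eigenvectorUnitary) _).trans ?_
  rw [exp_diagonal]
  congr 3
  funext j
  rw [Pi.exp_def, Complex.exp_eq_exp_ℂ]
  rfl

theorem IsHermitian.exp_smul_mulVec_eq_self_iff {A : Matrix n n ℂ} (hA : A.IsHermitian) (c : ℂ)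
    (e : n → ℂ) :
    NormedSpace.exp (c • A) *ᵥ e = e ↔
      ∀ j, (star (hA.eigenvectorUnitary : Matrix n n ℂ) *ᵥ e) j ≠ 0 →
        Complex.exp (c * hA.eigenvalues j) = 1 := by
  rw [hA.exp_smul, ← conj_diagonal_mulVec_eq_smul_iff, one_smul]

theorem IsHermitian.exists_mulVec_eq_smul_apply_ne_zero_iff (hA : A.IsHermitian) (θ : ℝ) (a : n) :
    (∃ z : n → 𝕜, A *ᵥ z = (θ : 𝕜) • z ∧ z a ≠ 0) ↔
      ∃ j, hA.eigenvalues j = θ ∧ (hA.eigenvectorUnitary : Matrix n n 𝕜) a j ≠ 0 := by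
  set U : Matrix n n 𝕜 := (hA.eigenvectorUnitary : Matrix n n 𝕜)
  constructor
  · rintro ⟨z, hz, hza⟩
    rw [hA.mulVec_eq_smul_iff] at hz
    by_contra! hU
    have hz' : z = U *ᵥ (star U *ᵥ z) := by
      rw [mulVec_mulVec, mem_unitaryGroup_iff.mp hA.eigenvectorUnitary.2, one_mulVec]
    refine hza ?_
    rw [hz']
    change ∑ j, U a j * (star U *ᵥ z) j = 0
    refine Finset.sum_eq_zero fun j _ => ?_
    by_cases hj : (star U *ᵥ z) j = 0
    · rw [hj, mul_zero]
    · rw [hU j (RCLike.ofReal_injective (hz j hj)), zero_mul]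
  · rintro ⟨j, rfl, hj⟩
    refine ⟨hA.eigenvectorBasis j, funext fun i => ?_, hj⟩
    simpa [RCLike.real_smul_eq_coe_mul] using congrFun (hA.mulVec_eigenvectorBasis j) i

theorem star_mulVec_single_one_apply {α : Type*} [CommSemiring α] [StarRing α] (U : Matrix n n α)
    (a j : n) : (star U *ᵥ Pi.single a 1) j = star (U a j) := by
  simp

end Matrix

theorem inSupport_iff_exists_complex {n : Type*} [Fintype n] (L : Matrix n n ℝ) (a : n) (θ : ℝ) :
    inSupport L a θ ↔ ∃ z : n → ℂ, L.map Complex.ofReal *ᵥ z = (θ : ℂ) • z ∧ z a ≠ 0 := by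
  constructor
  · rintro ⟨v, -, hv, hva⟩
    refine ⟨fun i => (v i : ℂ), funext fun i => ?_, by simpa using hva⟩
    simpa [mulVec, dotProduct] using congrArg Complex.ofReal (congrFun hv i)
  · rintro ⟨z, hz, hza⟩
    have hreal : ∀ f : ℂ →ₗ[ℝ] ℝ, L *ᵥ (f ∘ z) = θ • (f ∘ z) := fun f => funext fun i => by
      have := congrArg f (congrFun hz i)
      simpa [mulVec, dotProduct, map_sum, ← Complex.real_smul] using this
    by_cases hre : (z a).re = 0
    · have him : (z a).im ≠ 0 := fun him => hza (Complex.ext hre him)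
      exact ⟨fun i => (z i).im, fun h => him (congrFun h a), hreal Complex.imLm, him⟩
    · exact ⟨fun i => (z i).re, fun h => hre (congrFun h a), hreal Complex.reLm, hre⟩

theorem Matrix.IsSymm.isHermitian_map_ofReal {n : Type*} {L : Matrix n n ℝ} (hL : L.IsSymm) :
    (L.map Complex.ofReal).IsHermitian :=
  (isHermitian_iff_isSymm.2 hL).map _ fun x => (Complex.conj_ofReal x).symm

section RealSymmetric

variable {n : Type*} [Fintype n] [DecidableEq n] {L : Matrix n n ℝ}

theorem inSupport_iff_exists_eigenvalues_eq (hL : (L.map Complex.ofReal).IsHermitian) (a : n)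
    (θ : ℝ) :
    inSupport L a θ ↔
      ∃ j, hL.eigenvalues j = θ ∧ (hL.eigenvectorUnitary : Matrix n n ℂ) a j ≠ 0 :=
  (inSupport_iff_exists_complex L a θ).trans (hL.exists_mulVec_eq_smul_apply_ne_zero_iff θ a)

theorem exp_smul_mulVec_single_eq_self_iff (hL : L.IsSymm) (c : ℂ) (a : n) :
    NormedSpace.exp (c • L.map Complex.ofReal) *ᵥ Pi.single a 1 = Pi.single a 1 ↔
      ∀ θ, inSupport L a θ → Complex.exp (c * θ) = 1 := by
  have hL := hL.isHermitian_map_ofReal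
  simp only [hL.exp_smul_mulVec_eq_self_iff, star_mulVec_single_one_apply, ne_eq, star_eq_zero,
    inSupport_iff_exists_eigenvalues_eq hL]
  constructor
  · rintro h θ ⟨j, rfl, hj⟩
    exact h j hj
  · exact fun h j hj => h _ ⟨j, rfl, hj⟩

theorem exists_inSupport_ne_zero (hL : L.IsSymm) {a : n} (haa : L a a ≠ 0) :
    ∃ θ ≠ 0, inSupport L a θ := by
  have hL := hL.isHermitian_map_ofReal
  by_contra! h
  have hker : L.map Complex.ofReal *ᵥ Pi.single a 1 = (0 : ℂ) • Pi.single a 1 := by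
    rw [hL.mulVec_eq_smul_iff]
    intro j hj
    by_contra hθ
    rw [star_mulVec_single_one_apply, star_ne_zero] at hj
    exact h _ (fun h0 => hθ (by simp [h0]))
      ((inSupport_iff_exists_eigenvalues_eq hL a _).2 ⟨j, rfl, hj⟩)
  apply haa
  simpa using congrFun hker a

end RealSymmetric

open AddSubgroup in
theorem Finset.mul_intCast_gcd_mem_iff {R ι : Type*} [Ring R] (H : AddSubgroup R) (s : Finset ι)
    (f : ι → ℤ) (x : R) : x * ((s.gcd f : ℤ) : R) ∈ H ↔ ∀ i ∈ s, x * (f i : R) ∈ H := by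
  constructor
  · intro h i hi
    obtain ⟨k, hk⟩ := Finset.gcd_dvd hi (f := f)
    rw [hk, Int.cast_mul, ← mul_assoc, ← zsmul_eq_mul']
    exact H.zsmul_mem h k
  · intro h
    obtain ⟨g, hg⟩ := s.gcd_eq_sum_mul f
    rw [hg, Int.cast_sum, Finset.mul_sum]
    refine H.sum_mem fun i hi => ?_
    rw [Int.cast_mul, ← mul_assoc, ← zsmul_eq_mul']
    exact H.zsmul_mem (h i hi) (g i)

theorem AddSubgroup.mul_mem_zmultiples_mul_iff {K : Type*} [DivisionRing K] {a : K} (ha : a ≠ 0)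
    (x c : K) : x * a ∈ zmultiples (c * a) ↔ x ∈ zmultiples c := by
  simp only [mem_zmultiples_iff, ← smul_mul_assoc, mul_left_inj' ha]

theorem isLeast_pos_mem_zmultiples {R : Type*} [Ring R] [LinearOrder R] [IsStrictOrderedRing R]
    {c : R} (hc : 0 < c) : IsLeast {x | 0 < x ∧ x ∈ AddSubgroup.zmultiples c} c := by
  refine ⟨⟨hc, AddSubgroup.mem_zmultiples c⟩, ?_⟩
  rintro _ ⟨hx, k, rfl⟩
  dsimp only at hx ⊢
  rw [zsmul_eq_mul] at hx ⊢
  have hk : (1 : R) ≤ k := by exact_mod_cast (pos_of_mul_pos_left hx hc.le : (0 : R) < k)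
  simpa using mul_le_mul_of_nonneg_right hk hc.le

theorem mOf_ne_zero (T : Finset ℚ) : mOf T ≠ 0 := by
  simp [mOf, Finset.lcm_eq_zero_iff]

theorem num_mOf_mul {T : Finset ℚ} {q : ℚ} (hq : q ∈ T) :
    (((mOf T : ℚ) * q).num : ℚ) = mOf T * q := by
  obtain ⟨k, hk⟩ : q.den ∣ mOf T := Finset.dvd_lcm hq
  have : (mOf T : ℚ) * q = ((k * q.num : ℤ) : ℚ) := by
    rw [hk, Nat.cast_mul, mul_comm (q.den : ℚ), mul_assoc, Rat.den_mul_eq_num]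
    push_cast
    ring
  rw [this, Rat.num_intCast]

theorem gOf_pos {T : Finset ℚ} (hT : ∃ q ∈ T, q ≠ 0) : 0 < gOf T := by
  obtain ⟨q, hq, hq0⟩ := hT
  refine (Int.nonneg_of_normalize_eq_self Finset.normalize_gcd).lt_of_ne' ?_
  simp only [ne_eq, Finset.gcd_eq_zero_iff, not_forall]
  exact ⟨q, hq, by simp [hq0, mOf_ne_zero]⟩

open AddSubgroup in
theorem forall_mul_mem_zmultiples_iff {T : Finset ℚ} (hT : ∃ q ∈ T, q ≠ 0) (c x : ℝ) :
    (∀ q ∈ T, x * q ∈ zmultiples c) ↔ x ∈ zmultiples (mOf T * c / gOf T) := by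
  have hm : (mOf T : ℝ) ≠ 0 := by exact_mod_cast mOf_ne_zero T
  have hg : (gOf T : ℝ) ≠ 0 := by exact_mod_cast (gOf_pos hT).ne'
  calc (∀ q ∈ T, x * q ∈ zmultiples c)
      ↔ ∀ q ∈ T, x * (((mOf T : ℚ) * q).num : ℝ) ∈ zmultiples (c * mOf T) := by
        refine forall₂_congr fun q hq => ?_
        have : (((mOf T : ℚ) * q).num : ℝ) = mOf T * q := by
          exact_mod_cast congrArg ((↑) : ℚ → ℝ) (num_mOf_mul hq)
        rw [this, ← mul_assoc, mul_right_comm, mul_mem_zmultiples_mul_iff hm]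
    _ ↔ x * (gOf T : ℝ) ∈ zmultiples (c * mOf T) := (Finset.mul_intCast_gcd_mem_iff _ _ _ x).symm
    _ ↔ x ∈ zmultiples (mOf T * c / gOf T) := by
        rw [← mul_mem_zmultiples_mul_iff hg x, div_mul_cancel₀ _ hg, mul_comm c]

theorem Complex.exp_ofReal_mul_I_eq_one_iff (x : ℝ) :
    Complex.exp (x * Complex.I) = 1 ↔ x ∈ AddSubgroup.zmultiples (2 * Real.pi) := by
  rw [← Circle.coe_exp, Circle.coe_eq_one, Circle.exp_eq_one,
    AddSubgroup.mem_zmultiples_iff]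
  simp only [zsmul_eq_mul, eq_comm]

section NormalizedLaplacian

variable {V : Type*} [Fintype V] [DecidableEq V] (G : SimpleGraph V) [DecidableRel G.Adj]

theorem normLap_isSymm : (normLap G).IsSymm := by
  rw [normLap, IsSymm, transpose_mul, transpose_mul, diagonal_transpose, transpose_sub,
    diagonal_transpose, SimpleGraph.transpose_adjMatrix, mul_assoc]

theorem normLap_apply_self {a : V} (ha : 0 < G.degree a) : normLap G a a = 1 := by
  have hd : (0 : ℝ) < G.degree a := by exact_mod_cast ha
  rw [normLap, mul_diagonal, diagonal_mul, Matrix.sub_apply, diagonal_apply_eq, G.adjMatrix_apply,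
    if_neg (G.loopless.irrefl a), sub_zero]
  field_simp
  exact (Real.sq_sqrt hd.le).symm

theorem qwalk_mulVec_single_eq_self_iff (τ : ℝ) (a : V) :
    qwalk G τ *ᵥ Pi.single a 1 = Pi.single a 1 ↔
      ∀ θ, inSupport (normLap G) a θ → τ * θ ∈ AddSubgroup.zmultiples (2 * Real.pi) := by
  rw [qwalk, exp_smul_mulVec_single_eq_self_iff (normLap_isSymm G)]
  refine forall₂_congr fun θ _ => ?_
  rw [← Complex.exp_ofReal_mul_I_eq_one_iff]
  push_cast
  ring_nf

end NormalizedLaplacian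

/-- if the eigenvalue support of `a` consists of the rationals in `T`,
then `τ₀ = 2mπ/g` is the smallest positive period of `a`, and every positive period
is an integer multiple of `τ₀`. -/
theorem minimal_period_of_rational_support {V : Type*} [Fintype V] [DecidableEq V]
    (G : SimpleGraph V) [DecidableRel G.Adj]
    (hG : G.Connected) (hcard : 2 ≤ Fintype.card V) (a : V)
    (T : Finset ℚ)
    (hT : ∀ θ : ℝ, inSupport (normLap G) a θ ↔ ∃ q ∈ T, (q : ℝ) = θ) :
    IsLeast {τ : ℝ | 0 < τ ∧
        (qwalk G τ).mulVec (Pi.single a 1) = (Pi.single a 1 : V → ℂ)}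
      (2 * (mOf T : ℝ) * Real.pi / (gOf T : ℝ)) ∧
    ∀ τ : ℝ, 0 < τ →
      (qwalk G τ).mulVec (Pi.single a 1) = (Pi.single a 1 : V → ℂ) →
      ∃ n : ℤ, τ = (n : ℝ) * (2 * (mOf T : ℝ) * Real.pi / (gOf T : ℝ)) := by
  have : Nontrivial V := Fintype.one_lt_card_iff_nontrivial.1 hcard
  have hT0 : ∃ q ∈ T, q ≠ 0 := by
    have haa := normLap_apply_self G (hG.preconnected.degree_pos_of_nontrivial a)
    obtain ⟨θ, hθ, hsupp⟩ :=
      exists_inSupport_ne_zero (normLap_isSymm G) (haa ▸ one_ne_zero)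
    obtain ⟨q, hq, rfl⟩ := (hT θ).1 hsupp
    exact ⟨q, hq, by exact_mod_cast hθ⟩
  have hτ₀ : 2 * (mOf T : ℝ) * Real.pi / gOf T = mOf T * (2 * Real.pi) / gOf T := by ring
  have hperiod : ∀ τ, qwalk G τ *ᵥ Pi.single a 1 = Pi.single a 1 ↔
      τ ∈ AddSubgroup.zmultiples (2 * (mOf T : ℝ) * Real.pi / gOf T) := fun τ => by
    rw [qwalk_mulVec_single_eq_self_iff, hτ₀, ← forall_mul_mem_zmultiples_iff hT0]
    simp [hT]
  have hpos : 0 < 2 * (mOf T : ℝ) * Real.pi / gOf T := by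
    have hg := gOf_pos hT0
    have hm := Nat.pos_of_ne_zero (mOf_ne_zero T)
    positivity
  refine ⟨by simpa only [hperiod] using isLeast_pos_mem_zmultiples hpos, fun τ _ h => ?_⟩
  obtain ⟨n, hn⟩ := AddSubgroup.mem_zmultiples_iff.1 ((hperiod τ).1 h)
  exact ⟨n, by rw [← hn, zsmul_eq_mul]⟩
end

section
/- Let G be a connected finite simple graph on at least three vertices with normalized Laplacian 𝓛, and let a and b be strongly cospectral vertices with positive eigenvalue support S⁺ and negative eigenvalue support S⁻. Then S⁺ contains at least two distinct eigenvalues and S⁻ contains at least one eigenvalue. -/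
open Matrix

/-!
The eigenvalue `0` lies in `S⁺`, witnessed by the positive eigenvector `D^{1/2} 𝟙`.
If `S⁻` were empty, every eigenvector nonzero at `a` would agree at `a` and `b`, so the rows `a`
and `b` of an orthogonal matrix of eigenvectors would have inner product `‖row a‖² = 1` instead
of `0`. If `S⁺ = {0}`, then `e_a + e_b` is orthogonal to every eigenvector of a nonzero
eigenvalue (those outside the support of `a` vanish at `b` too, those in `S⁻` are opposite at
`a` and `b`), so `𝓛 (e_a + e_b) = 0`. Since the off-diagonal entries of `𝓛` are nonpositive and
negative exactly on edges, no vertex other than `a`, `b` is adjacent to `a` or `b`, which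
contradicts connectivity once there is a third vertex.
-/

namespace Matrix.IsHermitian

variable {V : Type*} [Fintype V] [DecidableEq V] {L : Matrix V V ℝ} (hL : L.IsHermitian)

theorem sum_eigenvectorBasis_mul_eigenvectorBasis (x y : V) :
    ∑ i, hL.eigenvectorBasis i x * hL.eigenvectorBasis i y = if x = y then 1 else 0 := by
  simpa [Matrix.mul_apply, Matrix.one_apply] using
    congrFun₂ (Unitary.coe_mul_star_self hL.eigenvectorUnitary) x y

theorem eq_zero_of_forall_eigenvectorBasis_dotProduct_eq_zero {v : V → ℝ}
    (h : ∀ i, ⇑(hL.eigenvectorBasis i) ⬝ᵥ v = 0) : v = 0 := by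
  have hUv : star (hL.eigenvectorUnitary : Matrix V V ℝ) *ᵥ v = 0 := by
    funext i
    simpa [Matrix.mulVec, dotProduct] using h i
  rw [← one_mulVec v, ← Unitary.coe_mul_star_self hL.eigenvectorUnitary, ← mulVec_mulVec,
    Unitary.coe_star, hUv, mulVec_zero]

theorem mulVec_eq_zero_of_forall_eigenvalues_mul_dotProduct_eq_zero {v : V → ℝ}
    (h : ∀ i, hL.eigenvalues i * (⇑(hL.eigenvectorBasis i) ⬝ᵥ v) = 0) : L *ᵥ v = 0 := by
  refine hL.eq_zero_of_forall_eigenvectorBasis_dotProduct_eq_zero fun i => ?_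
  rw [dotProduct_mulVec, ← mulVec_transpose, ← conjTranspose_eq_transpose_of_trivial, hL.eq,
    mulVec_eigenvectorBasis, smul_dotProduct, smul_eq_mul, h]

end Matrix.IsHermitian

section StronglyCospectral

variable {V : Type*} [Fintype V] {L : Matrix V V ℝ} {a b : V} {θ : ℝ}

theorem inSupport_of_mulVec_eq_smul {v : V → ℝ} (hv : L *ᵥ v = θ • v) (ha : v a ≠ 0) :
    inSupport L a θ :=
  ⟨v, fun h => ha (congrFun h a), hv, ha⟩

variable [DecidableEq V]

theorem StronglyCospectral.exists_sminus (hL : L.IsHermitian) (hsc : StronglyCospectral L a b)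
    (hab : a ≠ b) : ∃ θ, Sminus L a b θ := by
  by_contra! hno
  have hrow : ∀ i, hL.eigenvectorBasis i a * hL.eigenvectorBasis i b =
      hL.eigenvectorBasis i a * hL.eigenvectorBasis i a := by
    intro i
    by_cases ha : hL.eigenvectorBasis i a = 0
    · simp [ha]
    rcases hsc (hL.eigenvalues i) with h | h
    · rw [h _ (hL.mulVec_eigenvectorBasis i)]
    · exact absurd ⟨inSupport_of_mulVec_eq_smul (hL.mulVec_eigenvectorBasis i) ha, h⟩ (hno _)
  have h₀ := hL.sum_eigenvectorBasis_mul_eigenvectorBasis a b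
  have h₁ := hL.sum_eigenvectorBasis_mul_eigenvectorBasis a a
  simp only [hrow, if_neg hab] at h₀
  simp [h₀] at h₁

theorem StronglyCospectral.mulVec_single_add_single_eq_zero (hL : L.IsHermitian)
    (hsc : StronglyCospectral L a b) (hplus : ∀ θ, Splus L a b θ → θ = 0) :
    L *ᵥ (Pi.single a 1 + Pi.single b 1) = 0 := by
  refine hL.mulVec_eq_zero_of_forall_eigenvalues_mul_dotProduct_eq_zero fun i => ?_
  have hv := hL.mulVec_eigenvectorBasis i
  rw [dotProduct_add, dotProduct_single_one, dotProduct_single_one, mul_eq_zero]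
  rcases hsc (hL.eigenvalues i) with h | h
  · by_cases ha : hL.eigenvectorBasis i a = 0
    · right
      rw [← h _ hv, ha, add_zero]
    · exact Or.inl (hplus _ ⟨inSupport_of_mulVec_eq_smul hv ha, h⟩)
  · right
    rw [h _ hv, neg_add_cancel]

end StronglyCospectral

theorem SimpleGraph.Preconnected.exists_adj_of_three_le_card {V : Type*} [Fintype V]
    {G : SimpleGraph V} (hG : G.Preconnected) (hcard : 3 ≤ Fintype.card V) (a b : V) :
    ∃ x, x ≠ a ∧ x ≠ b ∧ (G.Adj x a ∨ G.Adj x b) := by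
  classical
  obtain ⟨z, -, hz⟩ := Finset.exists_mem_notMem_of_card_lt_card (s := {a, b}) (t := .univ)
    (Finset.card_le_two.trans_lt (by simpa [Nat.lt_iff_add_one_le] using hcard))
  obtain ⟨d, -, hd, hd'⟩ := (hG a z).some.exists_boundary_dart {a, b} (by simp)
    (by simpa using hz)
  simp only [Set.mem_insert_iff, Set.mem_singleton_iff, not_or] at hd hd'
  rcases hd with h | h
  · exact ⟨d.snd, hd'.1, hd'.2, .inl (h ▸ d.adj.symm)⟩
  · exact ⟨d.snd, hd'.1, hd'.2, .inr (h ▸ d.adj.symm)⟩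

section normLap

variable {V : Type*} [Fintype V] [DecidableEq V] (G : SimpleGraph V) [DecidableRel G.Adj]

theorem normLap_isHermitian : (normLap G).IsHermitian := by
  rw [IsHermitian, conjTranspose_eq_transpose_of_trivial, normLap, transpose_mul, transpose_mul,
    transpose_sub, diagonal_transpose, diagonal_transpose, SimpleGraph.transpose_adjMatrix,
    Matrix.mul_assoc]

theorem normLap_apply_of_ne {x y : V} (h : x ≠ y) :
    normLap G x y = -((√(G.degree x))⁻¹ * G.adjMatrix ℝ x y * (√(G.degree y))⁻¹) := by
  rw [normLap, mul_diagonal, diagonal_mul, Matrix.sub_apply, diagonal_apply_ne _ h]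
  ring

theorem normLap_apply_nonpos {x y : V} (h : x ≠ y) : normLap G x y ≤ 0 := by
  rw [normLap_apply_of_ne G h, neg_nonpos, SimpleGraph.adjMatrix_apply]
  split_ifs <;> positivity

theorem normLap_apply_neg_of_adj {x y : V} (h : G.Adj x y) : normLap G x y < 0 := by
  have hx : (0 : ℝ) < G.degree x := mod_cast h.degree_pos_left
  have hy : (0 : ℝ) < G.degree y := mod_cast h.degree_pos_right
  rw [normLap_apply_of_ne G h.ne, neg_neg_iff_pos, SimpleGraph.adjMatrix_apply, if_pos h]
  positivity

theorem normLap_mulVec_sqrt_degree (hdeg : ∀ v, 0 < G.degree v) :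
    normLap G *ᵥ (fun v => √(G.degree v)) = 0 := by
  have hinv : (diagonal fun v => (√(G.degree v))⁻¹) *ᵥ (fun v => √(G.degree v)) = 1 := by
    funext v
    rw [mulVec_diagonal]
    exact inv_mul_cancel₀ (Real.sqrt_pos.mpr (mod_cast hdeg v)).ne'
  have hconst : (diagonal (fun v => (G.degree v : ℝ)) - G.adjMatrix ℝ) *ᵥ 1 = 0 := by
    funext v
    simp [sub_mulVec, mulVec_diagonal, SimpleGraph.adjMatrix_mulVec_apply]
  rw [normLap, ← mulVec_mulVec, ← mulVec_mulVec, hinv, hconst, mulVec_zero]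

theorem StronglyCospectral.splus_zero_normLap (hdeg : ∀ v, 0 < G.degree v) {a b : V}
    (hsc : StronglyCospectral (normLap G) a b) : Splus (normLap G) a b 0 := by
  have hw : normLap G *ᵥ (fun v => √(G.degree v)) = (0 : ℝ) • fun v => √(G.degree v) := by
    rw [zero_smul, normLap_mulVec_sqrt_degree G hdeg]
  have hpos : ∀ v, 0 < √(G.degree v) := fun v => Real.sqrt_pos.mpr (mod_cast hdeg v)
  rcases hsc 0 with h | h
  · exact ⟨inSupport_of_mulVec_eq_smul hw (hpos a).ne', h⟩
  · linarith [h _ hw, hpos a, hpos b]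

theorem normLap_mulVec_single_add_single_ne_zero {a b x : V} (hxa : x ≠ a) (hxb : x ≠ b)
    (hadj : G.Adj x a ∨ G.Adj x b) : normLap G *ᵥ (Pi.single a 1 + Pi.single b 1) ≠ 0 := by
  intro h
  have hx : normLap G x a + normLap G x b = 0 := by
    simpa [mulVec_add] using congrFun h x
  rcases hadj with hadj | hadj
  · linarith [normLap_apply_neg_of_adj G hadj, normLap_apply_nonpos G hxb]
  · linarith [normLap_apply_neg_of_adj G hadj, normLap_apply_nonpos G hxa]

end normLap

/-- for strongly cospectral vertices in a connected graph on at least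
three vertices, `|S⁺| ≥ 2` and `|S⁻| ≥ 1`. -/
theorem Splus_two_Sminus_nonempty {V : Type*} [Fintype V] [DecidableEq V]
    (G : SimpleGraph V) [DecidableRel G.Adj]
    (hG : G.Connected) (hcard : 3 ≤ Fintype.card V) (a b : V) (hab : a ≠ b)
    (hsc : StronglyCospectral (normLap G) a b) :
    (∃ θ₁ θ₂ : ℝ, θ₁ ≠ θ₂ ∧ Splus (normLap G) a b θ₁ ∧ Splus (normLap G) a b θ₂) ∧
    (∃ θ : ℝ, Sminus (normLap G) a b θ) := by
  have hL := normLap_isHermitian G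
  refine ⟨?_, hsc.exists_sminus hL hab⟩
  have : Nontrivial V := Fintype.one_lt_card_iff_nontrivial.mp (by omega)
  have hzero := hsc.splus_zero_normLap G fun v => hG.preconnected.degree_pos_of_nontrivial v
  by_contra! hplus
  obtain ⟨x, hxa, hxb, hadj⟩ := hG.preconnected.exists_adj_of_three_le_card hcard a b
  refine normLap_mulVec_single_add_single_ne_zero G hxa hxb hadj
    (hsc.mulVec_single_add_single_eq_zero hL fun θ hθ => ?_)
  by_contra hθ0
  exact hplus θ 0 hθ0 hθ hzero
end
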